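/- Let p ∈ (−∞, 1). Then for every f : Ω → (0,∞), ‖f‖_p = inf { E[f·g] : g : Ω → (0,∞), ‖g‖_{p'} ≥ 1 }, where p' = p/(p−1) for p ≠ 0 and 0' = 0. (Reverse Hölder duality.) -/

import Mathlib

open Real Finset

noncomputable section

variable {Ω : Type*}

/-- Expectation `E f = ∑ ω, μ ω * f ω`. -/
def pexp [Fintype Ω] (μ : Ω → ℝ) (f : Ω → ℝ) : ℝ := ∑ ω, μ ω * f ω

/-- Dirichlet form `𝓔(f,g) = E[f · L g]`. -/
def dform [Fintype Ω] (μ : Ω → ℝ) (L : (Ω → ℝ) →ₗ[ℝ] (Ω → ℝ)) (f g : Ω → ℝ) : ℝ :=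
  pexp μ fun ω => f ω * L g ω

/-- Entropy `Ent(f) = E[f log f] − (E f) log (E f)`. -/
def entE [Fintype Ω] (μ : Ω → ℝ) (f : Ω → ℝ) : ℝ :=
  pexp μ (fun ω => f ω * Real.log (f ω)) - pexp μ f * Real.log (pexp μ f)

/-- Variance `Var(f) = E[f²] − (E f)²`. -/
def varE [Fintype Ω] (μ : Ω → ℝ) (f : Ω → ℝ) : ℝ :=
  pexp μ (fun ω => f ω ^ 2) - (pexp μ f) ^ 2

/-- The structural conditions on the Markov generator `L`: `L 1 = 0`, self-adjointness,
positive semidefiniteness, and nonnegativity of `L f` at a global maximum point of `f`. -/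
def IsGen [Fintype Ω] (μ : Ω → ℝ) (L : (Ω → ℝ) →ₗ[ℝ] (Ω → ℝ)) : Prop :=
  L (fun _ => 1) = 0 ∧
  (∀ f g, pexp μ (fun ω => f ω * L g ω) = pexp μ (fun ω => g ω * L f ω)) ∧
  (∀ f, 0 ≤ pexp μ (fun ω => f ω * L f ω)) ∧
  (∀ (f : Ω → ℝ) (ω : Ω), (∀ x, f x ≤ f ω) → 0 ≤ L f ω)

/-- The `p`-logSob inequality with constant `C` (with the conventions for `p = 0` and `p = 1`). -/
def LogSob [Fintype Ω] (μ : Ω → ℝ) (L : (Ω → ℝ) →ₗ[ℝ] (Ω → ℝ)) (p C : ℝ) : Prop :=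
  if p = 0 then
    ∀ f : Ω → ℝ, (∀ ω, 0 < f ω) →
      varE μ (fun ω => Real.log (f ω)) ≤ -(C / 2) * dform μ L f (fun ω => (f ω)⁻¹)
  else if p = 1 then
    ∀ f : Ω → ℝ, (∀ ω, 0 < f ω) →
      entE μ f ≤ C / 4 * dform μ L f (fun ω => Real.log (f ω))
  else
    ∀ f : Ω → ℝ, (∀ ω, 0 < f ω) →
      entE μ (fun ω => f ω ^ p) ≤
        C * p ^ 2 / (4 * (p - 1)) * dform μ L (fun ω => f ω ^ (p - 1)) f

/-- Markov semigroup `T t = e^{-tL}`. -/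
def heat [Fintype Ω] (L : (Ω → ℝ) →ₗ[ℝ] (Ω → ℝ)) (t : ℝ) (f : Ω → ℝ) : Ω → ℝ :=
  NormedSpace.exp ((-t) • (LinearMap.toContinuousLinearMap L)) f

/-- `‖f‖_p` for positive `f` and arbitrary real `p`, with `‖f‖_0 = exp (E log f)`. -/
def pnorm [Fintype Ω] (μ : Ω → ℝ) (p : ℝ) (f : Ω → ℝ) : ℝ :=
  if p = 0 then Real.exp (pexp μ fun ω => Real.log (f ω))
  else (pexp μ fun ω => f ω ^ p) ^ (1 / p)

/-- `‖f‖_p = (E |f|^p)^{1/p}` for real-valued `f`. -/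
def pnormAbs [Fintype Ω] (μ : Ω → ℝ) (p : ℝ) (f : Ω → ℝ) : ℝ :=
  (pexp μ fun ω => |f ω| ^ p) ^ (1 / p)

/-- Hölder conjugate `p' = p/(p-1)`, with the convention `0' = 0`. -/
def hconj (p : ℝ) : ℝ := if p = 0 then 0 else p / (p - 1)

/-- The simple generator `L = Id − E`. -/
def simpleL [Fintype Ω] (μ : Ω → ℝ) : (Ω → ℝ) →ₗ[ℝ] (Ω → ℝ) where
  toFun f := fun ω => f ω - pexp μ f
  map_add' f g := by
    funext ω
    simp only [Pi.add_apply, pexp, mul_add, Finset.sum_add_distrib]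
    ring
  map_smul' c f := by
    funext ω
    simp only [Pi.smul_apply, smul_eq_mul, pexp, RingHom.id_apply]
    rw [mul_sub, Finset.mul_sum]
    congr 1
    exact Finset.sum_congr rfl fun x _ => by ring

/-! For `p < 1` the reverse Hölder inequality `‖f‖_p ‖g‖_{p'} ≤ E[fg]` holds, so every admissible
`g` gives `E[fg] ≥ ‖f‖_p`. For `0 < p < 1` it is ordinary Hölder with exponents `1/p`, `1/(1-p)`
applied to `f^p = (fg)^p (g^{p'})^{1-p}`; for `p < 0` the conjugate `p'` lies in `(0, 1)` and the
roles of `f` and `g` are exchanged; for `p = 0` it is AM-GM for `fg`. The infimum is attained at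
`g = (f / ‖f‖_p)^{p-1}`, for which `‖g‖_{p'} = 1` and `E[fg] = ‖f‖_p`. -/

section ReverseHolder

variable [Fintype Ω] {μ : Ω → ℝ}

lemma nonempty_of_sum_eq_one (hμ1 : ∑ ω, μ ω = 1) : Nonempty Ω :=
  Finset.univ_nonempty_iff.mp <| Finset.nonempty_of_sum_ne_zero (f := μ) (by simp [hμ1])

lemma pexp_nonneg (hμ : ∀ ω, 0 ≤ μ ω) {h : Ω → ℝ} (hh : ∀ ω, 0 ≤ h ω) : 0 ≤ pexp μ h :=
  Finset.sum_nonneg fun ω _ => mul_nonneg (hμ ω) (hh ω)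

lemma pexp_pos [Nonempty Ω] (hμ : ∀ ω, 0 < μ ω) {h : Ω → ℝ} (hh : ∀ ω, 0 < h ω) :
    0 < pexp μ h :=
  Finset.sum_pos (fun ω _ => mul_pos (hμ ω) (hh ω)) Finset.univ_nonempty

lemma pexp_const (hμ1 : ∑ ω, μ ω = 1) (c : ℝ) : pexp μ (fun _ => c) = c := by
  simp only [pexp, ← Finset.sum_mul, hμ1, one_mul]

lemma pexp_div_const (f : Ω → ℝ) (c : ℝ) : pexp μ (fun ω => f ω / c) = pexp μ f / c := by
  simp only [pexp, Finset.sum_div, mul_div_assoc]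

lemma pnorm_pos [Nonempty Ω] (hμ : ∀ ω, 0 < μ ω) (p : ℝ) {f : Ω → ℝ} (hf : ∀ ω, 0 < f ω) :
    0 < pnorm μ p f := by
  unfold pnorm
  split_ifs
  · exact exp_pos _
  · exact rpow_pos_of_pos (pexp_pos hμ fun ω => rpow_pos_of_pos (hf ω) p) _

lemma hconj_hconj {p : ℝ} (hp : p ≠ 1) : hconj (hconj p) = p := by
  by_cases hp0 : p = 0
  · simp [hconj, hp0]
  have hp1 : p - 1 ≠ 0 := sub_ne_zero.mpr hp
  have hq0 : p / (p - 1) ≠ 0 := div_ne_zero hp0 hp1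
  have hq1 : p / (p - 1) - 1 ≠ 0 := by
    rw [div_sub_one hp1]; simpa using hp1
  simp only [hconj, hp0, hq0, if_false]
  field_simp
  ring

lemma hconj_pos_of_neg {p : ℝ} (hp : p < 0) : 0 < hconj p := by
  rw [hconj, if_neg hp.ne]
  exact div_pos_of_neg_of_neg hp (by linarith)

lemma hconj_lt_one_of_neg {p : ℝ} (hp : p < 0) : hconj p < 1 := by
  rw [hconj, if_neg hp.ne, div_lt_one_of_neg (by linarith)]
  linarith

lemma exp_pexp_log_le_pexp (hμ : ∀ ω, 0 ≤ μ ω) (hμ1 : ∑ ω, μ ω = 1) {h : Ω → ℝ}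
    (hh : ∀ ω, 0 < h ω) : exp (pexp μ fun ω => log (h ω)) ≤ pexp μ h := by
  calc exp (pexp μ fun ω => log (h ω))
      = ∏ ω, h ω ^ μ ω := by
        rw [pexp, exp_sum]
        exact Finset.prod_congr rfl fun ω _ => by rw [rpow_def_of_pos (hh ω), mul_comm]
    _ ≤ pexp μ h :=
        geom_mean_le_arith_mean_weighted _ μ h (fun ω _ => hμ ω) hμ1 fun ω _ => (hh ω).le

lemma pexp_rpow_mul_rpow_le (hμ : ∀ ω, 0 ≤ μ ω) {θ : ℝ} (hθ0 : 0 < θ) (hθ1 : θ < 1)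
    {u v : Ω → ℝ} (hu : ∀ ω, 0 ≤ u ω) (hv : ∀ ω, 0 ≤ v ω) :
    pexp μ (fun ω => u ω ^ θ * v ω ^ (1 - θ)) ≤ pexp μ u ^ θ * pexp μ v ^ (1 - θ) := by
  have hθ1' : 0 < 1 - θ := sub_pos.mpr hθ1
  have hμu ω : 0 ≤ μ ω * u ω := mul_nonneg (hμ ω) (hu ω)
  have hμv ω : 0 ≤ μ ω * v ω := mul_nonneg (hμ ω) (hv ω)
  have holder := inner_le_Lp_mul_Lq_of_nonneg Finset.univ
    (HolderConjugate.inv_inv hθ0 hθ1' (add_sub_cancel θ 1))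
    (fun ω _ => rpow_nonneg (hμu ω) θ) (fun ω _ => rpow_nonneg (hμv ω) (1 - θ))
  simp only [rpow_rpow_inv (hμu _) hθ0.ne', rpow_rpow_inv (hμv _) hθ1'.ne', one_div,
    inv_inv] at holder
  refine le_of_eq_of_le (Finset.sum_congr rfl fun ω _ => ?_) holder
  rw [mul_rpow (hμ ω) (hu ω), mul_rpow (hμ ω) (hv ω), mul_mul_mul_comm,
    ← rpow_add' (hμ ω) (by simp), add_sub_cancel, rpow_one]

lemma pnorm_mul_pnorm_hconj_le_of_pos [Nonempty Ω] (hμ : ∀ ω, 0 < μ ω) {p : ℝ} (hp0 : 0 < p)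
    (hp1 : p < 1) {f g : Ω → ℝ} (hf : ∀ ω, 0 < f ω) (hg : ∀ ω, 0 < g ω) :
    pnorm μ p f * pnorm μ (hconj p) g ≤ pexp μ (fun ω => f ω * g ω) := by
  set q := p / (p - 1) with hq
  have hpq : q * (1 - p) = -p := by rw [hq]; field_simp [(sub_neg.mpr hp1).ne]; ring
  have hq0 : q ≠ 0 := div_ne_zero hp0.ne' (sub_neg.mpr hp1).ne
  set A := pexp μ fun ω => f ω ^ p
  set B := pexp μ fun ω => g ω ^ q
  set E := pexp μ fun ω => f ω * g ω
  have hA : 0 ≤ A := (pexp_pos hμ fun ω => rpow_pos_of_pos (hf ω) p).le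
  have hB : 0 < B := pexp_pos hμ fun ω => rpow_pos_of_pos (hg ω) q
  have hE : 0 ≤ E := (pexp_pos hμ fun ω => mul_pos (hf ω) (hg ω)).le
  have holder : A ≤ E ^ p * B ^ (1 - p) := by
    refine le_of_eq_of_le (Finset.sum_congr rfl fun ω _ => ?_)
      (pexp_rpow_mul_rpow_le (fun ω => (hμ ω).le) hp0 hp1
        (fun ω => (mul_pos (hf ω) (hg ω)).le) fun ω => (rpow_pos_of_pos (hg ω) q).le)
    dsimp only
    rw [mul_rpow (hf ω).le (hg ω).le, ← rpow_mul (hg ω).le, hpq, rpow_neg (hg ω).le,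
      mul_assoc, mul_inv_cancel₀ (rpow_pos_of_pos (hg ω) p).ne', mul_one]
  rw [pnorm, if_neg hp0.ne', hconj, if_neg hp0.ne', ← hq, pnorm, if_neg hq0]
  calc A ^ (1 / p) * B ^ (1 / q) ≤ (E ^ p * B ^ (1 - p)) ^ (1 / p) * B ^ (1 / q) := by gcongr
    _ = E := by
      rw [mul_rpow (rpow_nonneg hE p) (rpow_nonneg hB.le _), ← rpow_mul hE, ← rpow_mul hB.le,
        mul_assoc, ← rpow_add hB, mul_one_div_cancel hp0.ne', rpow_one, hq]
      field_simp
      simp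

lemma pnorm_mul_pnorm_hconj_le (hμ : ∀ ω, 0 < μ ω) (hμ1 : ∑ ω, μ ω = 1) {p : ℝ} (hp : p < 1)
    {f g : Ω → ℝ} (hf : ∀ ω, 0 < f ω) (hg : ∀ ω, 0 < g ω) :
    pnorm μ p f * pnorm μ (hconj p) g ≤ pexp μ (fun ω => f ω * g ω) := by
  have := nonempty_of_sum_eq_one hμ1
  rcases lt_trichotomy p 0 with hneg | rfl | hpos
  · have h := pnorm_mul_pnorm_hconj_le_of_pos hμ (hconj_pos_of_neg hneg)
      (hconj_lt_one_of_neg hneg) hg hf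
    rw [hconj_hconj hp.ne, mul_comm] at h
    simpa only [mul_comm (g _)] using h
  · have hlog : (pexp μ fun ω => log (f ω * g ω)) =
        (pexp μ fun ω => log (f ω)) + pexp μ fun ω => log (g ω) := by
      simp only [pexp, log_mul (hf _).ne' (hg _).ne', mul_add, Finset.sum_add_distrib]
    rw [hconj, if_pos rfl, pnorm, if_pos rfl, pnorm, if_pos rfl, ← exp_add, ← hlog]
    exact exp_pexp_log_le_pexp (fun ω => (hμ ω).le) hμ1 fun ω => mul_pos (hf ω) (hg ω)
  · exact pnorm_mul_pnorm_hconj_le_of_pos hμ hpos hp hf hg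

lemma pnorm_rpow_self (hμ : ∀ ω, 0 ≤ μ ω) {p : ℝ} (hp0 : p ≠ 0) {f : Ω → ℝ}
    (hf : ∀ ω, 0 ≤ f ω) : pnorm μ p f ^ p = pexp μ fun ω => f ω ^ p := by
  rw [pnorm, if_neg hp0, one_div,
    rpow_inv_rpow (pexp_nonneg hμ fun ω => rpow_nonneg (hf ω) p) hp0]

variable (μ) in
def dualExtremal (p : ℝ) (f : Ω → ℝ) : Ω → ℝ := fun ω => (f ω / pnorm μ p f) ^ (p - 1)

lemma dualExtremal_pos [Nonempty Ω] (hμ : ∀ ω, 0 < μ ω) (p : ℝ) {f : Ω → ℝ}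
    (hf : ∀ ω, 0 < f ω) (ω : Ω) : 0 < dualExtremal μ p f ω :=
  rpow_pos_of_pos (div_pos (hf ω) (pnorm_pos hμ p hf)) _

lemma pexp_mul_dualExtremal (hμ : ∀ ω, 0 < μ ω) (hμ1 : ∑ ω, μ ω = 1) (p : ℝ) {f : Ω → ℝ}
    (hf : ∀ ω, 0 < f ω) : pexp μ (fun ω => f ω * dualExtremal μ p f ω) = pnorm μ p f := by
  have := nonempty_of_sum_eq_one hμ1
  have hN := pnorm_pos hμ p hf
  rcases eq_or_ne p 0 with rfl | hp0
  · have hfg ω : f ω * dualExtremal μ 0 f ω = pnorm μ 0 f := by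
      simp only [dualExtremal, zero_sub, rpow_neg_one, inv_div]
      field_simp [(hf ω).ne']
    simp only [hfg, pexp_const hμ1]
  · have hfg ω : f ω * dualExtremal μ p f ω = f ω ^ p / pnorm μ p f ^ (p - 1) := by
      rw [dualExtremal, div_rpow (hf ω).le hN.le, rpow_sub_one (hf ω).ne']
      field_simp [(hf ω).ne']
    have hNp := pnorm_rpow_self (fun ω => (hμ ω).le) hp0 fun ω => (hf ω).le
    simp only [hfg, pexp_div_const, ← hNp, rpow_sub_one hN.ne']
    field_simp

lemma pnorm_hconj_dualExtremal (hμ : ∀ ω, 0 < μ ω) (hμ1 : ∑ ω, μ ω = 1) {p : ℝ} (hp : p ≠ 1)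
    {f : Ω → ℝ} (hf : ∀ ω, 0 < f ω) : pnorm μ (hconj p) (dualExtremal μ p f) = 1 := by
  have := nonempty_of_sum_eq_one hμ1
  have hN := pnorm_pos hμ p hf
  rcases eq_or_ne p 0 with rfl | hp0
  · have hlog ω : log (dualExtremal μ 0 f ω) = log (pnorm μ 0 f) - log (f ω) := by
      simp only [dualExtremal, zero_sub, rpow_neg_one, inv_div]
      exact log_div hN.ne' (hf ω).ne'
    have hlogN : log (pnorm μ 0 f) = pexp μ fun ω => log (f ω) := by
      rw [pnorm, if_pos rfl, log_exp]
    rw [hconj, if_pos rfl, pnorm, if_pos rfl, exp_eq_one_iff]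
    simp only [hlog, pexp, mul_sub, Finset.sum_sub_distrib, ← Finset.sum_mul, hμ1, one_mul]
    rw [hlogN, pexp, sub_self]
  · have hq0 : hconj p ≠ 0 := by
      rw [hconj, if_neg hp0]; exact div_ne_zero hp0 (sub_ne_zero.mpr hp)
    have hpq : (p - 1) * hconj p = p := by
      rw [hconj, if_neg hp0]; field_simp [sub_ne_zero.mpr hp]
    have hgq ω : dualExtremal μ p f ω ^ hconj p = f ω ^ p / pnorm μ p f ^ p := by
      rw [dualExtremal, ← rpow_mul (div_pos (hf ω) hN).le, hpq, div_rpow (hf ω).le hN.le]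
    rw [pnorm, if_neg hq0]
    simp only [hgq, pexp_div_const, pnorm_rpow_self (fun ω => (hμ ω).le) hp0 fun ω => (hf ω).le]
    rw [div_self (pexp_pos hμ fun ω => rpow_pos_of_pos (hf ω) p).ne', one_rpow]

end ReverseHolder

/-- reverse Hölder duality for `p < 1`. -/
theorem reverse_holder_duality [Fintype Ω] (μ : Ω → ℝ)
    (hμpos : ∀ ω, 0 < μ ω) (hμ1 : ∑ ω, μ ω = 1)
    (p : ℝ) (hp : p < 1) (f : Ω → ℝ) (hf : ∀ ω, 0 < f ω) :
    pnorm μ p f =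
      sInf {x : ℝ | ∃ g : Ω → ℝ, (∀ ω, 0 < g ω) ∧ 1 ≤ pnorm μ (hconj p) g ∧
        x = pexp μ (fun ω => f ω * g ω)} := by
  have := nonempty_of_sum_eq_one hμ1
  refine (IsLeast.csInf_eq ⟨?_, ?_⟩).symm
  · exact ⟨dualExtremal μ p f, dualExtremal_pos hμpos p hf,
      (pnorm_hconj_dualExtremal hμpos hμ1 hp.ne hf).ge, (pexp_mul_dualExtremal hμpos hμ1 p hf).symm⟩
  rintro _ ⟨g, hg, hg_norm, rfl⟩
  calc pnorm μ p f ≤ pnorm μ p f * pnorm μ (hconj p) g :=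
        le_mul_of_one_le_right (pnorm_pos hμpos p hf).le hg_norm
    _ ≤ pexp μ (fun ω => f ω * g ω) := pnorm_mul_pnorm_hconj_le hμpos hμ1 hp hf hg

end
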